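/- arXiv:1409.3182 — 4 statements merged into one kernel-verified Lean document; each statement's English description precedes it below -/
import Mathlib

section
/- Let H be a finite-dimensional complex inner product space, and let S and T be mutually orthogonal subspaces of H (i.e. ⟪s,t⟫ = 0 for all s ∈ S, t ∈ T). Let v ∈ S and w ∈ T be unit vectors, let m ≥ 1, and let U_1, …, U_m be unitary operators on H each of which maps S into the orthogonal complement of T, i.e. for every i ∈ [m], every s ∈ S and every t ∈ T one has ⟪t, U_i s⟫ = 0. Suppose that ‖w − U_m ⋯ U_1 v‖ ≤ ε for some 0 ≤ ε < 1/2. Define the intermediate states v_i := U_i ⋯ U_1 v for i ∈ [m]. Then there exists i ∈ [m] such that 1 − ‖Π_S v_i‖² − ‖Π_T v_i‖² ≥ ((1 − 2ε)/(2m))², where Π_S and Π_T denote the orthogonal projections onto S and T respectively. -/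
/-- The state obtained after applying the first `k` of the unitaries `U 0, U 1, …` to `v`. -/
noncomputable def iterApply {H : Type*} [NormedAddCommGroup H] [InnerProductSpace ℂ H]
    (U : ℕ → (H ≃ₗᵢ[ℂ] H)) (v : H) : ℕ → H
  | 0 => v
  | k + 1 => U k (iterApply U v k)

/-!
Write `r_k := v_k - Π_S v_k - Π_T v_k` for the part of the state `v_k` outside `S ⊕ T`;
by Pythagoras `‖r_k‖²` is the quantity to be bounded below. Since `U_k` maps `Π_S v_k` into `Tᗮ`,
only `Π_T v_k + r_k` contributes to `Π_T v_{k+1}`, so `‖Π_T v_{k+1}‖ ≤ ‖Π_T v_k‖ + ‖r_k‖`.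
Telescoping from `Π_T v_0 = 0` to `‖Π_T v_m‖ ≥ ‖w‖ - ε = 1 - ε` gives `∑_{k<m} ‖r_k‖ ≥ 1 - ε`,
so some `‖r_k‖` exceeds `(1 - 2ε)/(2m)`, and `k ≠ 0` because `r_0 = 0`.
-/

open Finset

theorem le_add_sum_range_of_succ_le_add {α : Type*} [AddCommMonoid α] [PartialOrder α]
    [IsOrderedAddMonoid α] {a b : ℕ → α} {n : ℕ} (h : ∀ k < n, a (k + 1) ≤ a k + b k) :
    a n ≤ a 0 + ∑ k ∈ range n, b k := by
  induction n with
  | zero => simp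
  | succ n ih =>
    calc a (n + 1) ≤ a n + b n := h n n.lt_succ_self
      _ ≤ a 0 + ∑ k ∈ range n, b k + b n := by
          gcongr; exact ih fun k hk => h k (hk.trans n.lt_succ_self)
      _ = a 0 + ∑ k ∈ range (n + 1), b k := by rw [sum_range_succ, add_assoc]

theorem exists_div_lt_of_succ_le_add {a b : ℕ → ℝ} {m : ℕ} {c : ℝ} (hc : 0 ≤ c)
    (ha : a 0 = 0) (hb : b 0 = 0) (h : ∀ k < m, a (k + 1) ≤ a k + b k) (hcm : c < a m) :
    ∃ k, 1 ≤ k ∧ k < m ∧ c / m < b k := by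
  have hsum : ∑ _ ∈ range m, c / m < ∑ k ∈ range m, b k := by
    calc ∑ _ ∈ range m, c / m = c * (m / m) := by
          simp only [sum_const, card_range, nsmul_eq_mul]; ring
      _ ≤ c := mul_le_of_le_one_right hc (div_self_le_one _)
      _ < a m := hcm
      _ ≤ ∑ k ∈ range m, b k := by simpa [ha] using le_add_sum_range_of_succ_le_add h
  obtain ⟨k, hk, hck⟩ := exists_lt_of_sum_lt hsum
  have hk0 : k ≠ 0 := by
    rintro rfl
    exact (hb ▸ hck).not_ge (by positivity)
  exact ⟨k, Nat.one_le_iff_ne_zero.2 hk0, mem_range.1 hk, hck⟩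

theorem norm_iterApply {H : Type*} [NormedAddCommGroup H] [InnerProductSpace ℂ H]
    (U : ℕ → (H ≃ₗᵢ[ℂ] H)) (v : H) (k : ℕ) : ‖iterApply U v k‖ = ‖v‖ := by
  induction k with
  | zero => rfl
  | succ k ih => rw [iterApply, LinearIsometryEquiv.norm_map, ih]

namespace Submodule

variable {𝕜 E : Type*} [RCLike 𝕜] [NormedAddCommGroup E] [InnerProductSpace 𝕜 E]
  {S T : Submodule 𝕜 E} [S.HasOrthogonalProjection] [T.HasOrthogonalProjection]

theorem IsOrtho.norm_sub_starProjection_sub_starProjection_sq (h : S ⟂ T) (x : E) :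
    ‖x - S.starProjection x - T.starProjection x‖ ^ 2 =
      ‖x‖ ^ 2 - ‖S.starProjection x‖ ^ 2 - ‖T.starProjection x‖ ^ 2 := by
  set y := x - S.starProjection x
  have hTy : T.starProjection y = T.starProjection x := by
    rw [map_sub, (starProjection_apply_eq_zero_iff T).2 (h (starProjection_apply_mem S x)),
      sub_zero]
  have hx := norm_sq_eq_add_norm_sq_starProjection x S
  have hy := norm_sq_eq_add_norm_sq_starProjection y T
  rw [starProjection_orthogonal_val] at hx
  rw [starProjection_orthogonal_val, hTy] at hy
  linarith

theorem norm_starProjection_le_add_of_mapsTo_orthogonal (U : E →ₗᵢ[𝕜] E)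
    (hU : ∀ s ∈ S, U s ∈ Tᗮ) (x : E) :
    ‖T.starProjection (U x)‖ ≤
      ‖T.starProjection x‖ + ‖x - S.starProjection x - T.starProjection x‖ := by
  set r := x - S.starProjection x - T.starProjection x with hr
  have hx : x = S.starProjection x + (T.starProjection x + r) := by rw [hr]; abel
  have hS : T.starProjection (U (S.starProjection x)) = 0 :=
    (starProjection_apply_eq_zero_iff T).2 (hU _ (starProjection_apply_mem S x))
  calc ‖T.starProjection (U x)‖ = ‖T.starProjection (U (T.starProjection x + r))‖ := by
        conv_lhs => rw [hx, map_add, map_add, hS, zero_add]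
    _ ≤ ‖U (T.starProjection x + r)‖ := norm_starProjection_apply_le T _
    _ = ‖T.starProjection x + r‖ := U.norm_map _
    _ ≤ ‖T.starProjection x‖ + ‖r‖ := norm_add_le _ _

theorem norm_sub_norm_sub_le_norm_starProjection {w : E} (hw : w ∈ T) (y : E) :
    ‖w‖ - ‖w - y‖ ≤ ‖T.starProjection y‖ := by
  have : ‖w - T.starProjection y‖ ≤ ‖w - y‖ := by
    rw [← starProjection_eq_self_iff.2 hw, ← map_sub, starProjection_eq_self_iff.2 hw]
    exact norm_starProjection_apply_le T _
  linarith [norm_sub_norm_le w (T.starProjection y)]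

end Submodule

theorem traversal_lemma_general {H : Type*} [NormedAddCommGroup H] [InnerProductSpace ℂ H]
    [FiniteDimensional ℂ H]
    (S T : Submodule ℂ H)
    (hST : ∀ s ∈ S, ∀ t ∈ T, (inner ℂ s t : ℂ) = 0)
    (v w : H) (hvS : v ∈ S) (hwT : w ∈ T) (hv : ‖v‖ = 1) (hw : ‖w‖ = 1)
    (m : ℕ)
    (U : ℕ → (H ≃ₗᵢ[ℂ] H))
    (hU : ∀ i < m, ∀ s ∈ S, ∀ t ∈ T, (inner ℂ t ((U i) s) : ℂ) = 0)
    (ε : ℝ) (hε : ε < 1 / 2)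
    (happrox : ‖w - iterApply U v m‖ ≤ ε) :
    ∃ i, 1 ≤ i ∧ i ≤ m ∧
      ((1 - 2 * ε) / (2 * m)) ^ 2 ≤
        1 - ‖(Submodule.orthogonalProjectionOnto S (iterApply U v i) : H)‖ ^ 2
          - ‖(Submodule.orthogonalProjectionOnto T (iterApply U v i) : H)‖ ^ 2 := by
  simp only [Submodule.coe_orthogonalProjectionOnto_apply]
  set r : ℕ → H := fun k => iterApply U v k - S.starProjection (iterApply U v k)
    - T.starProjection (iterApply U v k)
  have hSTo : S ⟂ T := Submodule.isOrtho_iff_inner_eq.2 hST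
  have hvT : T.starProjection v = 0 := (Submodule.starProjection_apply_eq_zero_iff T).2 (hSTo hvS)
  have hr0 : r 0 = 0 := by simp [r, iterApply, Submodule.starProjection_eq_self_iff.2 hvS, hvT]
  have hr_sq (k : ℕ) : ‖r k‖ ^ 2 = 1 - ‖S.starProjection (iterApply U v k)‖ ^ 2
      - ‖T.starProjection (iterApply U v k)‖ ^ 2 := by
    rw [hSTo.norm_sub_starProjection_sub_starProjection_sq, norm_iterApply, hv, one_pow]
  have hstep : ∀ k < m, ‖T.starProjection (iterApply U v (k + 1))‖ ≤
      ‖T.starProjection (iterApply U v k)‖ + ‖r k‖ := fun k hk =>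
    Submodule.norm_starProjection_le_add_of_mapsTo_orthogonal (U k).toLinearIsometry
      (fun s hs => (Submodule.mem_orthogonal _ _).2 fun t ht => hU k hk s hs t ht) _
  have hreach : (1 - 2 * ε) / 2 < ‖T.starProjection (iterApply U v m)‖ := by
    linarith [Submodule.norm_sub_norm_sub_le_norm_starProjection hwT (iterApply U v m)]
  obtain ⟨k, hk1, hkm, hk⟩ := exists_div_lt_of_succ_le_add
    (a := fun k => ‖T.starProjection (iterApply U v k)‖) (b := fun k => ‖r k‖) (by linarith)
    (by simp [iterApply, hvT]) (by simp [hr0]) hstep hreach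
  refine ⟨k, hk1, hkm.le, ?_⟩
  rw [← hr_sq, ← div_div]
  exact pow_le_pow_left₀ (div_nonneg (by linarith) m.cast_nonneg) hk.le 2

/-- **The Traversal Lemma.** If `S` and `T` are mutually orthogonal subspaces, `v ∈ S` and
`w ∈ T` are unit vectors, and each unitary `U i` maps `S` into the orthogonal complement of `T`,
then any sequence of `m` such unitaries mapping `v` to within `ε < 1/2` of `w` must, at some
step `i ∈ [m]`, produce a state whose overlap with the orthogonal complement of `S + T` is at
least `((1 - 2ε)/(2m))²`. -/
theorem traversal_lemma {H : Type*} [NormedAddCommGroup H] [InnerProductSpace ℂ H]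
    [FiniteDimensional ℂ H]
    (S T : Submodule ℂ H)
    (hST : ∀ s ∈ S, ∀ t ∈ T, (inner ℂ s t : ℂ) = 0)
    (v w : H) (hvS : v ∈ S) (hwT : w ∈ T) (hv : ‖v‖ = 1) (hw : ‖w‖ = 1)
    (m : ℕ) (hm : 1 ≤ m)
    (U : ℕ → (H ≃ₗᵢ[ℂ] H))
    (hU : ∀ i < m, ∀ s ∈ S, ∀ t ∈ T, (inner ℂ t ((U i) s) : ℂ) = 0)
    (ε : ℝ) (hε0 : 0 ≤ ε) (hε : ε < 1 / 2)
    (happrox : ‖w - iterApply U v m‖ ≤ ε) :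
    ∃ i, 1 ≤ i ∧ i ≤ m ∧
      ((1 - 2 * ε) / (2 * m)) ^ 2 ≤
        1 - ‖(Submodule.orthogonalProjectionOnto S (iterApply U v i) : H)‖ ^ 2
          - ‖(Submodule.orthogonalProjectionOnto T (iterApply U v i) : H)‖ ^ 2 :=
  traversal_lemma_general S T hST v w hvS hwT hv hw m U hU ε hε happrox
end

section
/- Let ι and κ be nonempty finite types and let v, w : ι × κ → ℂ be vectors in the bipartite Hilbert space ℂ^{ι} ⊗ ℂ^{κ} (indexed by ι × κ). Then the following are equivalent: (1) for every unitary matrix U ∈ U(κ), ⟪w, (1_ι ⊗ U) v⟫ = 0, where (1_ι ⊗ U)(i,j),(i',j') := [i = i']·U(j,j') and ⟪·,·⟫ is the standard Hermitian inner product (conjugate-linear in the first argument); (2) the partial trace over ι of the operator |v⟩⟨w| vanishes, i.e. for all j, j' ∈ κ one has Σ_{i ∈ ι} v(i,j) · conj(w(i,j')) = 0. -/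
lemma signed_perm_unitary {κ : Type*} [Fintype κ] [DecidableEq κ]
    (σ : Equiv.Perm κ) (ε : κ → ℂ) (hε : ∀ j, ε j = 1 ∨ ε j = -1) :
    (Matrix.of fun j k : κ => ε j * (if σ j = k then 1 else 0)) ∈
      Matrix.unitaryGroup κ ℂ := by
  have hεsq : ∀ j, ε j * star (ε j) = 1 := by
    intro j; rcases hε j with h | h <;> simp [h]
  rw [Matrix.mem_unitaryGroup_iff]
  ext j k
  simp only [Matrix.mul_apply, Matrix.star_apply, Matrix.of_apply, star_mul', Matrix.one_apply]
  rw [Finset.sum_eq_single (σ j)]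
  · rcases eq_or_ne j k with rfl | hjk
    · have := hεsq j; simpa using this
    · have : σ j ≠ σ k := fun h => hjk (σ.injective h)
      simp [this.symm, hjk]
  · intro b _ hb
    simp [Ne.symm hb]
  · simp

lemma key_zero {κ : Type*} [Fintype κ] [DecidableEq κ] (N : Matrix κ κ ℂ)
    (h : ∀ U ∈ Matrix.unitaryGroup κ ℂ, ∑ a : κ, ∑ b : κ, U a b * N a b = 0) :
    ∀ a b, N a b = 0 := by
  have hperm : ∀ (σ : Equiv.Perm κ) (ε : κ → ℂ), (∀ j, ε j = 1 ∨ ε j = -1) →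
      ∑ a : κ, ε a * N a (σ a) = 0 := by
    intro σ ε hε
    have hU := h _ (signed_perm_unitary σ ε hε)
    have heq : ∀ a : κ, ∑ b : κ,
        (Matrix.of fun j k : κ => ε j * (if σ j = k then 1 else 0)) a b * N a b
        = ε a * N a (σ a) := by
      intro a
      rw [Finset.sum_eq_single (σ a)]
      · simp
      · intro b _ hb; simp [Matrix.of_apply, Ne.symm hb]
      · intro hb; exact absurd (Finset.mem_univ _) hb
    rw [Finset.sum_congr rfl fun a _ => heq a] at hU
    exact hU
  -- diagonal entries vanish
  have hdiag : ∀ a, N a a = 0 := by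
    intro a0
    have h1 := hperm 1 (fun _ => 1) (fun _ => Or.inl rfl)
    have h2 := hperm 1 (fun j => if j = a0 then -1 else 1)
      (fun j => by by_cases hj : j = a0 <;> simp [hj])
    simp only [Equiv.Perm.one_apply] at h1 h2
    simp only [one_mul] at h1
    have h3 : ∑ a : κ, ((1 : ℂ) - if a = a0 then -1 else 1) * N a a = 0 := by
      simp only [sub_mul, one_mul]
      rw [Finset.sum_sub_distrib, h1, h2]; ring
    have h4 : ∑ a : κ, ((1 : ℂ) - if a = a0 then -1 else 1) * N a a
        = 2 * N a0 a0 := by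
      rw [Finset.sum_eq_single a0]
      · norm_num
      · intro b _ hb; simp [hb]
      · intro hb; exact absurd (Finset.mem_univ _) hb
    rw [h4] at h3
    exact (mul_eq_zero.mp h3).resolve_left two_ne_zero
  intro a0 b0
  rcases eq_or_ne a0 b0 with rfl | hab
  · exact hdiag a0
  · have h1 := hperm (Equiv.swap a0 b0) (fun _ => 1) (fun _ => Or.inl rfl)
    have h2 := hperm (Equiv.swap a0 b0) (fun j => if j = b0 then -1 else 1)
      (fun j => by by_cases hj : j = b0 <;> simp [hj])
    have hred : ∀ ε : κ → ℂ, ∑ a : κ, ε a * N a (Equiv.swap a0 b0 a)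
        = ε a0 * N a0 b0 + ε b0 * N b0 a0 := by
      intro ε
      rw [← Finset.sum_subset (Finset.subset_univ {a0, b0})]
      · rw [Finset.sum_pair hab]
        simp [Equiv.swap_apply_left, Equiv.swap_apply_right]
      · intro x _ hx
        simp only [Finset.mem_insert, Finset.mem_singleton, not_or] at hx
        rw [Equiv.swap_apply_of_ne_of_ne hx.1 hx.2, hdiag, mul_zero]
    rw [hred] at h1 h2
    simp only [one_mul] at h1
    rw [if_neg hab, if_pos rfl] at h2
    -- h1 : N a0 b0 + N b0 a0 = 0, h2 : N a0 b0 - N b0 a0 = 0 (roughly)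
    have : (2:ℂ) * N a0 b0 = 0 := by linear_combination h1 + h2
    simpa using this

/-- **Characterization of orthogonality under local unitaries via the partial trace.**
For vectors `v, w` in a bipartite space `ℂ^ι ⊗ ℂ^κ`, the inner product `⟪w, (1 ⊗ U) v⟫`
vanishes for every unitary `U` on the `κ` subsystem if and only if the partial trace over
`ι` of `|v⟩⟨w|` is the zero operator. -/
theorem korth_iff_partialTrace_zero {ι κ : Type*} [Fintype ι] [Fintype κ]
    [Nonempty ι] [Nonempty κ] [DecidableEq ι] [DecidableEq κ]
    (v w : ι × κ → ℂ) :
    (∀ U ∈ Matrix.unitaryGroup κ ℂ,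
        ∑ p : ι × κ, starRingEnd ℂ (w p) *
          (Matrix.of fun p q : ι × κ =>
            (if p.1 = q.1 then (1 : ℂ) else 0) * U p.2 q.2).mulVec v p = 0)
      ↔ (∀ j j' : κ, ∑ i : ι, v (i, j) * starRingEnd ℂ (w (i, j')) = 0) := by
  set N : Matrix κ κ ℂ := Matrix.of fun a b => ∑ i : ι, starRingEnd ℂ (w (i, a)) * v (i, b)
    with hN
  have main_eq : ∀ U : Matrix κ κ ℂ,
      (∑ p : ι × κ, starRingEnd ℂ (w p) *
        (Matrix.of fun p q : ι × κ =>
          (if p.1 = q.1 then (1 : ℂ) else 0) * U p.2 q.2).mulVec v p)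
      = ∑ a : κ, ∑ b : κ, U a b * N a b := by
    intro U
    simp only [hN, Matrix.mulVec, dotProduct, Matrix.of_apply,
      Fintype.sum_prod_type, ite_mul, one_mul, zero_mul, Finset.mul_sum]
    have step : ∀ (x : ι) (x1 : κ),
        (∑ x2 : ι, ∑ x3 : κ, (starRingEnd ℂ) (w (x, x1)) *
          if x = x2 then U x1 x3 * v (x2, x3) else 0)
        = ∑ x3 : κ, (starRingEnd ℂ) (w (x, x1)) * (U x1 x3 * v (x, x3)) := by
      intro x x1
      rw [Finset.sum_eq_single x]
      · simp
      · intro i' _ hi'; simp [Ne.symm hi']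
      · intro hi; exact absurd (Finset.mem_univ _) hi
    rw [Finset.sum_congr rfl fun x _ => Finset.sum_congr rfl fun x1 _ => step x x1]
    rw [Finset.sum_comm]
    refine Finset.sum_congr rfl fun a _ => ?_
    rw [Finset.sum_comm]
    refine Finset.sum_congr rfl fun i _ => ?_
    refine Finset.sum_congr rfl fun b _ => ?_
    ring
  constructor
  · intro h j j'
    have hz := key_zero N (fun U hU => by rw [← main_eq U]; exact h U hU) j' j
    rw [← hz]
    simp only [hN, Matrix.of_apply]
    exact Finset.sum_congr rfl fun i _ => mul_comm _ _
  · intro h U hU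
    rw [main_eq U]
    have hNz : ∀ a b, N a b = 0 := by
      intro a b
      have := h b a
      simp only [hN, Matrix.of_apply]
      rw [← this]
      exact Finset.sum_congr rfl fun i _ => mul_comm _ _
    simp [hNz]
end

section
/- Let d ≥ 1, let 0 < ε < 1, and let M be a d × d complex matrix such that ‖M Mᴴ − I‖ ≤ ε/(2(d + ε)) in spectral norm, where Mᴴ is the conjugate transpose. Then M Mᴴ is positive definite (in particular invertible), and there exists a unitary matrix U ∈ U(d) with ‖U − M‖ ≤ ε in spectral norm; moreover one may take U = (M Mᴴ)^{-1/2} M, where (M Mᴴ)^{-1/2} is the inverse of the positive semidefinite square root of M Mᴴ. -/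
/-!
The eigenvalues of `B = M Mᴴ` lie within `δ = ε/(2(d+ε)) ≤ 1/2` of `1`, so `B` is positive
definite, and on `[1 - δ, 1 + δ]` the function `x ↦ x^{-1/2}` stays within `δ` of `1`. By the
functional calculus `U = B^{-1/2} M` satisfies `U Uᴴ = B^{-1/2} B B^{-1/2} = 1`, and
`‖U - M‖ ≤ ‖B^{-1/2} - 1‖ ‖M‖ ≤ δ √(1 + δ) ≤ 2δ ≤ ε`.
-/

open scoped ComplexOrder

/-- The positive semidefinite square root of a positive semidefinite matrix
(`Matrix.PosSemidef.sqrt` of the older Mathlib, removed since; same definition). -/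
noncomputable def Matrix.PosSemidef.sqrt {n 𝕜 : Type*} [Fintype n] [RCLike 𝕜] [DecidableEq n]
    {A : Matrix n n 𝕜} (hA : A.PosSemidef) : Matrix n n 𝕜 :=
  hA.1.eigenvectorUnitary.1 * Matrix.diagonal ((↑) ∘ (√·) ∘ hA.1.eigenvalues) *
    (star hA.1.eigenvectorUnitary : Matrix n n 𝕜)

/-- The spectral norm (ℓ²→ℓ² operator norm) of a square complex matrix. -/
noncomputable def specNorm {n : Type*} [Fintype n] [DecidableEq n] (M : Matrix n n ℂ) : ℝ :=
  ‖Matrix.toEuclideanCLM (𝕜 := ℂ) M‖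

theorem Real.abs_inv_sqrt_sub_one_le {x δ : ℝ} (hδ : δ ≤ 1 / 2) (hx : |x - 1| ≤ δ) :
    |(√x)⁻¹ - 1| ≤ δ := by
  obtain ⟨hlo, -⟩ := abs_le.mp hx
  have hs : 1 / 2 ≤ √x := Real.le_sqrt_of_sq_le (by linarith)
  have hsq : √x ^ 2 = x := Real.sq_sqrt (by linarith)
  have key : (√x)⁻¹ - 1 = (1 - x) / (√x * (1 + √x)) := by
    field_simp
    nlinarith
  have hden : 1 ≤ √x * (1 + √x) := by nlinarith
  have hpos : 0 < √x * (1 + √x) := by linarith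
  rw [key, abs_div, abs_of_pos hpos, div_le_iff₀ hpos, abs_sub_comm]
  nlinarith [abs_nonneg (x - 1)]

section CStarAlgebra

variable {A : Type*} [CStarAlgebra A]

theorem IsSelfAdjoint.abs_sub_one_le_norm_sub_one {a : A} (ha : IsSelfAdjoint a) {x : ℝ}
    (hx : x ∈ spectrum ℝ a) : |x - 1| ≤ ‖a - 1‖ := by
  have h : cfc (fun x : ℝ => x - 1) a = a - 1 := by
    rw [cfc_sub .., cfc_id' .., cfc_const_one ..]
  simpa [h] using norm_apply_le_norm_cfc (fun x : ℝ => x - 1) a hx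

noncomputable def CFC.invSqrt (a : A) : A := cfc (fun x : ℝ => (√x)⁻¹) a

open CFC

variable [PartialOrder A] [StarOrderedRing A]

theorem IsSelfAdjoint.isStrictlyPositive_of_norm_sub_one_lt {a : A} (ha : IsSelfAdjoint a)
    (h : ‖a - 1‖ < 1) : IsStrictlyPositive a := by
  rw [StarOrderedRing.isStrictlyPositive_iff_spectrum_pos (R := ℝ) a]
  intro x hx
  linarith [(abs_lt.mp ((ha.abs_sub_one_le_norm_sub_one hx).trans_lt h)).1]

theorem IsStrictlyPositive.continuousOn_inv_sqrt {a : A} (ha : IsStrictlyPositive a) :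
    ContinuousOn (fun x : ℝ => (√x)⁻¹) (spectrum ℝ a) :=
  Real.continuous_sqrt.continuousOn.inv₀ fun _ hx => (Real.sqrt_pos.2 (ha.spectrum_pos hx)).ne'

theorem IsStrictlyPositive.invSqrt_mul_self_mul_invSqrt {a : A} (ha : IsStrictlyPositive a) :
    invSqrt a * a * invSqrt a = 1 := by
  -- found by the `cfc_cont_tac` auto-params of `cfc_mul`
  have hc := ha.continuousOn_inv_sqrt
  nth_rw 2 [← cfc_id' ℝ a]
  rw [CFC.invSqrt, ← cfc_mul .., ← cfc_mul .., ← cfc_const_one ℝ a]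
  refine cfc_congr fun x hx => ?_
  have hx0 := ha.spectrum_pos hx
  have := Real.sqrt_pos.2 hx0
  field_simp
  exact (Real.sq_sqrt hx0.le).symm

theorem IsStrictlyPositive.cfc_sqrt_mul_invSqrt {a : A} (ha : IsStrictlyPositive a) :
    cfc Real.sqrt a * invSqrt a = 1 := by
  rw [CFC.invSqrt, ← cfc_mul _ _ a (hg := ha.continuousOn_inv_sqrt), ← cfc_const_one ℝ a]
  exact cfc_congr fun x hx => mul_inv_cancel₀ (Real.sqrt_pos.2 (ha.spectrum_pos hx)).ne'

theorem IsStrictlyPositive.norm_invSqrt_sub_one_le {a : A} (ha : IsStrictlyPositive a) {δ : ℝ}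
    (hδ : δ ≤ 1 / 2) (h : ‖a - 1‖ ≤ δ) : ‖invSqrt a - 1‖ ≤ δ := by
  have hc := ha.continuousOn_inv_sqrt
  rw [CFC.invSqrt, ← cfc_const_one ℝ a, ← cfc_sub ..]
  refine norm_cfc_le ((norm_nonneg _).trans h) fun x hx => ?_
  exact Real.abs_inv_sqrt_sub_one_le hδ ((ha.isSelfAdjoint.abs_sub_one_le_norm_sub_one hx).trans h)

theorem IsStrictlyPositive.invSqrt_mul_mul_star_eq_one {m : A}
    (hm : IsStrictlyPositive (m * star m)) :
    invSqrt (m * star m) * m * star (invSqrt (m * star m) * m) = 1 := by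
  have hs : IsSelfAdjoint (invSqrt (m * star m)) := cfc_predicate _ _
  rw [star_mul, hs.star_eq, ← mul_assoc, mul_assoc _ m, hm.invSqrt_mul_self_mul_invSqrt]

theorem norm_invSqrt_mul_sub_le {m : A} {δ : ℝ} (hδ : δ ≤ 1 / 2) (h : ‖m * star m - 1‖ ≤ δ) :
    ‖invSqrt (m * star m) * m - m‖ ≤ 2 * δ := by
  have hpos := (IsSelfAdjoint.mul_star_self m).isStrictlyPositive_of_norm_sub_one_lt
    (h.trans_lt (by linarith))
  have hm : ‖m‖ ≤ 2 := by
    nontriviality A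
    have : ‖m‖ * ‖m‖ ≤ δ + 1 := by
      rw [← CStarRing.norm_self_mul_star, ← CStarRing.norm_one (E := A)]
      exact (norm_le_norm_sub_add _ _).trans (by gcongr)
    nlinarith [norm_nonneg m]
  calc ‖invSqrt (m * star m) * m - m‖ = ‖(invSqrt (m * star m) - 1) * m‖ := by
        rw [sub_mul, one_mul]
    _ ≤ ‖invSqrt (m * star m) - 1‖ * ‖m‖ := norm_mul_le _ _
    _ ≤ δ * 2 := by gcongr; exacts [(norm_nonneg _).trans h, hpos.norm_invSqrt_sub_one_le hδ h]
    _ = 2 * δ := mul_comm _ _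

end CStarAlgebra

theorem Matrix.PosSemidef.sqrt_eq_cfc {n 𝕜 : Type*} [Fintype n] [RCLike 𝕜] [DecidableEq n]
    {A : Matrix n n 𝕜} (hA : A.PosSemidef) : hA.sqrt = cfc Real.sqrt A := by
  rw [hA.1.cfc_eq]
  rfl

theorem pseudo_net_rounding_general (d : ℕ) (hd : 1 ≤ d) (ε : ℝ) (hε0 : 0 < ε)
    (M : Matrix (Fin d) (Fin d) ℂ)
    (hM : specNorm (M * M.conjTranspose - 1) ≤ ε / (2 * ((d : ℝ) + ε))) :
    ∃ hP : (M * M.conjTranspose).PosDef,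
      (hP.posSemidef.sqrt⁻¹ * M) ∈ Matrix.unitaryGroup (Fin d) ℂ ∧
        specNorm (hP.posSemidef.sqrt⁻¹ * M - M) ≤ ε := by
  open Matrix Matrix.Norms.L2Operator MatrixOrder in
  have hd' : (1 : ℝ) ≤ d := by exact_mod_cast hd
  have hδ : ε / (2 * ((d : ℝ) + ε)) ≤ 1 / 2 := by
    rw [div_le_iff₀ (by positivity)]; linarith
  have h2δ : 2 * (ε / (2 * ((d : ℝ) + ε))) ≤ ε := by
    rw [mul_div_assoc', div_le_iff₀ (by positivity)]; nlinarith
  -- under `Matrix.Norms.L2Operator`, `‖A‖` is `specNorm A` by definition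
  have hB : ‖M * star M - 1‖ ≤ ε / (2 * ((d : ℝ) + ε)) := hM
  have hpos := (IsSelfAdjoint.mul_star_self M).isStrictlyPositive_of_norm_sub_one_lt
    (hB.trans_lt (by linarith))
  refine ⟨hpos.posDef, ?_⟩
  rw [PosSemidef.sqrt_eq_cfc, ← star_eq_conjTranspose, inv_eq_right_inv hpos.cfc_sqrt_mul_invSqrt]
  exact ⟨mem_unitaryGroup_iff.2 hpos.invSqrt_mul_mul_star_eq_one,
    (norm_invSqrt_mul_sub_le hδ hB).trans h2δ⟩

/-- **Rounding half of the ε-pseudo-net lemma.** If `‖M Mᴴ - I‖ ≤ ε/(2(d + ε))` in spectral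
norm, then `M Mᴴ` is positive definite, and `(M Mᴴ)^{-1/2} M` is a unitary matrix within
spectral distance `ε` of `M`. -/
theorem pseudo_net_rounding (d : ℕ) (hd : 1 ≤ d) (ε : ℝ) (hε0 : 0 < ε) (hε1 : ε < 1)
    (M : Matrix (Fin d) (Fin d) ℂ)
    (hM : specNorm (M * M.conjTranspose - 1) ≤ ε / (2 * ((d : ℝ) + ε))) :
    ∃ hP : (M * M.conjTranspose).PosDef,
      (hP.posSemidef.sqrt⁻¹ * M) ∈ Matrix.unitaryGroup (Fin d) ℂ ∧
        specNorm (hP.posSemidef.sqrt⁻¹ * M - M) ≤ ε :=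
  pseudo_net_rounding_general d hd ε hε0 M hM
end

section
/- Let n ≥ 1 and let A, B ⊆ (Fin n → Fin 2) be sets of n-bit strings such that for all a ∈ A and b ∈ B the Hamming distance between a and b is at least k + 1. Let Q ⊆ Fin n be a set of coordinates with |Q| ≤ k, and let U be any n-qubit matrix (indexed by Fin n → Fin 2) that acts only on the qubits in Q, i.e. U(f, g) = 0 whenever there exists i ∉ Q with f(i) ≠ g(i). Then for every vector v in the span of the basis states {e_a : a ∈ A} and every vector w in the span of {e_b : b ∈ B}, one has ⟪w, U v⟫ = 0. -/
/-- **Hamming-separated spans of basis states are `k`-orthogonal.** If every string in `A`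
has Hamming distance at least `k + 1` from every string in `B`, `Q` is a set of at most `k`
qubit positions, and the matrix `U` acts only on the qubits in `Q`, then `⟪w, U v⟫ = 0`
for every `v` in the span of the basis states indexed by `A` and every `w` in the span of
the basis states indexed by `B`. -/
theorem hamming_separated_spans_korthogonal (n k : ℕ) (hn : 1 ≤ n)
    (A B : Set (Fin n → Fin 2))
    (hAB : ∀ a ∈ A, ∀ b ∈ B, k + 1 ≤ hammingDist a b)
    (Q : Finset (Fin n)) (hQ : Q.card ≤ k)
    (U : Matrix (Fin n → Fin 2) (Fin n → Fin 2) ℂ)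
    (hU : ∀ f g : Fin n → Fin 2, (∃ i, i ∉ Q ∧ f i ≠ g i) → U f g = 0)
    (v w : (Fin n → Fin 2) → ℂ)
    (hv : v ∈ Submodule.span ℂ ((fun a => Pi.single a (1 : ℂ)) '' A))
    (hw : w ∈ Submodule.span ℂ ((fun b => Pi.single b (1 : ℂ)) '' B)) :
    ∑ f : Fin n → Fin 2, starRingEnd ℂ (w f) * U.mulVec v f = 0 := by
  induction hv using Submodule.span_induction with
  | mem v hvmem =>
    obtain ⟨a, ha, rfl⟩ := hvmem
    induction hw using Submodule.span_induction with
    | mem w hwmem =>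
      obtain ⟨b, hb, rfl⟩ := hwmem
      have key : U b a = 0 := by
        apply hU
        by_contra h
        push_neg at h
        have hsub : (Finset.univ.filter fun i => b i ≠ a i) ⊆ Q := by
          intro i hi
          simp only [Finset.mem_filter] at hi
          by_contra hiQ
          exact hi.2 (h i hiQ)
        have hcard : hammingDist b a ≤ Q.card := by
          have := Finset.card_le_card hsub
          simpa [hammingDist] using this
        have := hAB a ha b hb
        rw [hammingDist_comm] at this
        omega
      have : ∀ f : Fin n → Fin 2,
          starRingEnd ℂ ((Pi.single b (1:ℂ) : (Fin n → Fin 2) → ℂ) f) * U.mulVec (Pi.single a 1) f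
            = if f = b then U b a else 0 := by
        intro f
        rcases eq_or_ne f b with rfl | hf
        · simp [Matrix.mulVec_single, Pi.single_apply]
        · simp [Pi.single_apply, hf]
      rw [Finset.sum_congr rfl fun f _ => this f]
      simp [key]
    | zero => simp
    | add w₁ w₂ _ _ h1 h2 =>
      simp only [Pi.add_apply, map_add, add_mul, Finset.sum_add_distrib, h1, h2, add_zero]
    | smul c w _ h =>
      simp only [Pi.smul_apply, smul_eq_mul, map_mul, mul_assoc, ← Finset.mul_sum, h, mul_zero]
  | zero => simp [Matrix.mulVec_zero]
  | add v₁ v₂ _ _ h1 h2 =>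
    simp only [Matrix.mulVec_add, Pi.add_apply, mul_add, Finset.sum_add_distrib, h1, h2, add_zero]
  | smul c v _ h =>
    simp only [Matrix.mulVec_smul, Pi.smul_apply, smul_eq_mul, mul_left_comm,
      ← Finset.mul_sum, h, mul_zero]
end
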